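/- Let $L$ be a Lie algebra over a field $k$ (char $k \neq 2$) and $V$ an $L$-module, and let $M = L \oplus V$ be the semidirect sum with projection $p$ onto $V$. Define $m_1 \times m_2 = \alpha [r(m_1), r(m_2)] + \beta[r(m_2), p(m_1)] - \beta[r(m_1), p(m_2)]$ where $r = \mathrm{id} - p$ and $\alpha, \beta \in k$ with $\beta \neq 0$. If $\times$ satisfies the Jacobi identity on $M$ for all modules $V$ containing elements $v$ with $[l_2,[l_3,v]]$ and $[l_3,[l_2,v]]$ linearly independent for suitable $l_2, l_3 \in L$, then $\beta = -\alpha$. Conversely, if $\beta = -\alpha$ then $m_1 \times m_2 = \alpha[m_1, m_2]$ and the Jacobi identity holds. -/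
import Mathlib


/-- The semidirect-sum bracket on `L × V`. -/
def sdBracket {L V : Type*} [LieRing L] [AddCommGroup V] [LieRingModule L V]
    (x y : L × V) : L × V :=
  (⁅x.1, y.1⁆, ⁅x.1, y.2⁆ - ⁅y.1, x.2⁆)

/-- The projection of `M = L ⊕ V` onto the summand `V`: `p(l + v) = v`. -/
def sdProj {L V : Type*} [LieRing L] [AddCommGroup V] (x : L × V) : L × V :=
  ((0 : L), x.2)

/-- The projection `r = id - p` of `M = L ⊕ V` onto the summand `L`: `r(l + v) = l`. -/
def sdRet {L V : Type*} [LieRing L] [AddCommGroup V] (x : L × V) : L × V :=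
  (x.1, (0 : V))

/-- in the semidirect sum `M = L ⊕ V` (char `k ≠ 2`) define
`m₁ × m₂ = α[r m₁, r m₂] + β[r m₂, p m₁] - β[r m₁, p m₂]` with `β ≠ 0`.
If `×` satisfies the Jacobi identity and `V` contains an element `v` with
`[l₂,[l₃,v]]` and `[l₃,[l₂,v]]` linearly independent for suitable `l₂, l₃ ∈ L`,
then `β = -α`. Conversely, if `β = -α` then `m₁ × m₂ = α[m₁, m₂]` and the Jacobi
identity holds. -/
theorem stmt16 {k L V : Type*} [Field k] (hchar : (2 : k) ≠ 0)
    [LieRing L] [LieAlgebra k L]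
    [AddCommGroup V] [Module k V] [LieRingModule L V] [LieModule k L V]
    (α β : k) (hβ : β ≠ 0)
    (times : (L × V) → (L × V) → (L × V))
    (htimes : ∀ x y : L × V, times x y =
      α • sdBracket (sdRet x) (sdRet y) + β • sdBracket (sdRet y) (sdProj x)
        - β • sdBracket (sdRet x) (sdProj y)) :
    ((∀ x y z : L × V,
        times (times x y) z + times (times y z) x + times (times z x) y = 0) →
      (∃ (l₂ l₃ : L) (v : V), LinearIndependent k ![⁅l₂, ⁅l₃, v⁆⁆, ⁅l₃, ⁅l₂, v⁆⁆]) →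
      β = -α) ∧
    (β = -α →
      (∀ x y : L × V, times x y = α • sdBracket x y) ∧
      (∀ x y z : L × V,
        times (times x y) z + times (times y z) x + times (times z x) y = 0)) := by
  have key : ∀ x y : L × V,
      times x y = (α • ⁅x.1, y.1⁆, β • ⁅y.1, x.2⁆ - β • ⁅x.1, y.2⁆) := by
    intro x y
    rw [htimes]
    simp [sdBracket, sdRet, sdProj, Prod.ext_iff, Prod.smul_def, smul_sub]
  constructor
  · intro hjac ⟨l₂, l₃, v, hli⟩
    have h := congrArg Prod.snd (hjac ((0 : L), v) ((l₂ : L), (0 : V)) ((l₃ : L), (0 : V)))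
    simp only [key, Prod.snd_add, Prod.snd_zero] at h
    simp only [lie_zero, zero_lie, smul_zero, lie_smul, smul_lie, smul_smul, sub_zero,
      zero_sub, smul_neg, lie_neg, neg_lie, zero_add, add_zero, sub_self, neg_neg] at h
    rw [LinearIndependent.pair_iff] at hli
    have h2' : (-(β * α) - β * β) • ⁅l₂, ⁅l₃, v⁆⁆ + (β * β + β * α) • ⁅l₃, ⁅l₂, v⁆⁆
        = 0 := by
      have hl : ⁅⁅l₂, l₃⁆, v⁆ = ⁅l₂, ⁅l₃, v⁆⁆ - ⁅l₃, ⁅l₂, v⁆⁆ := lie_lie l₂ l₃ v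
      rw [← h, hl]
      module
    have h3 := (hli _ _ h2').2
    have hβα : β * (β + α) = 0 := by linear_combination h3
    rcases mul_eq_zero.mp hβα with h | h
    · exact absurd h hβ
    · linear_combination h
  · intro hβα
    have ht : ∀ x y : L × V, times x y = α • sdBracket x y := by
      intro x y
      rw [key, hβα, Prod.ext_iff]
      refine ⟨rfl, ?_⟩
      simp only [sdBracket, Prod.smul_def, Prod.smul_snd]
      module
    refine ⟨ht, fun x y z => ?_⟩
    simp only [ht]
    have e1 : (⁅⁅x.1, y.1⁆, z.1⁆ : L) = -⁅z.1, ⁅x.1, y.1⁆⁆ := by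
      rw [← lie_skew z.1 ⁅x.1, y.1⁆, neg_neg]
    have e2 : (⁅⁅y.1, z.1⁆, x.1⁆ : L) = -⁅x.1, ⁅y.1, z.1⁆⁆ := by
      rw [← lie_skew x.1 ⁅y.1, z.1⁆, neg_neg]
    have e3 : (⁅⁅z.1, x.1⁆, y.1⁆ : L) = -⁅y.1, ⁅z.1, x.1⁆⁆ := by
      rw [← lie_skew y.1 ⁅z.1, x.1⁆, neg_neg]
    have hS : (⁅⁅x.1, y.1⁆, z.1⁆ + ⁅⁅y.1, z.1⁆, x.1⁆ + ⁅⁅z.1, x.1⁆, y.1⁆ : L) = 0 := by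
      rw [e1, e2, e3, ← neg_add, ← neg_add, neg_eq_zero, add_rotate]
      exact lie_jacobi x.1 y.1 z.1
    rw [Prod.ext_iff]
    constructor
    · simp only [sdBracket, Prod.smul_def, Prod.fst_add, Prod.smul_fst, Prod.fst_zero]
      rw [show (0 : L) = (α * α) •
          (⁅⁅x.1, y.1⁆, z.1⁆ + ⁅⁅y.1, z.1⁆, x.1⁆ + ⁅⁅z.1, x.1⁆, y.1⁆ : L) from by
        rw [hS, smul_zero]]
      simp only [smul_lie, smul_smul]
      module
    · simp only [sdBracket, Prod.smul_def, Prod.snd_add, Prod.smul_snd, Prod.snd_zero,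
        Prod.smul_fst, smul_lie, lie_smul, smul_sub, lie_sub, sub_lie, lie_lie, smul_smul]
      module
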